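/- arXiv:1906.05913 — 5 statements merged into one kernel-verified Lean document; each statement's English description precedes it below -/
import Mathlib

section
/- Let (p, a, b) be a Markov triple with p > a and p > b, and let u be an integer with 0 < u < p/2 satisfying b ≡ u·a (mod p) or b ≡ -u·a (mod p). Then u² ≡ -1 (mod p). -/
/-! Reducing the Markov equation `p² + a² + b² = 3pab` modulo `p` gives `a² + b² ≡ 0`, and
substituting `b ≡ ±u a` turns this into `(u² + 1) a² ≡ 0`. It remains to cancel `a²`, i.e. to
see that `p` and `a` are coprime: a common prime factor `q` would divide `b` too, and dividing
by `q²` would give a positive solution of `x² + y² + z² = 3q xyz`. No such solution exists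
because `3q ≥ 4`: Vieta jumping `z ↦ 3q xy - z` shrinks a solution until each coordinate is at
most the product of the other two, and then `x² + y² + z² ≤ 3xyz`. -/

lemma le_mul_of_sq_le_sq_add_sq {x y z : ℕ} (hy : 0 < y) (hz : 0 < z)
    (h : x ^ 2 ≤ y ^ 2 + z ^ 2) : x ≤ y * z := by
  by_contra! hlt
  have hsq : (y * z + 1) ^ 2 ≤ x ^ 2 := Nat.pow_le_pow_left hlt 2
  have hy2 : 1 ≤ y ^ 2 := Nat.one_le_pow _ _ hy
  have hz2 : 1 ≤ z ^ 2 := Nat.one_le_pow _ _ hz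
  nlinarith

/-- Vieta jumping: `z` and `n x y - z` are the two roots of `t² - n x y t + x² + y² = 0`. -/
lemma exists_lt_of_sq_add_sq_lt {n x y z : ℕ} (hy : 0 < y)
    (heq : x ^ 2 + y ^ 2 + z ^ 2 = n * x * y * z) (hlt : x ^ 2 + y ^ 2 < z ^ 2) :
    ∃ z' < z, 0 < z' ∧ x ^ 2 + y ^ 2 + z' ^ 2 = n * x * y * z' := by
  have hz : z < n * x * y := by nlinarith
  refine ⟨n * x * y - z, ?_, by omega, ?_⟩
  · zify [hz.le]; nlinarith
  · zify [hz.le]; nlinarith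

theorem sq_add_sq_add_sq_ne_mul_of_four_le {n : ℕ} (hn : 4 ≤ n) {x y z : ℕ}
    (hx : 0 < x) (hy : 0 < y) (hz : 0 < z) : x ^ 2 + y ^ 2 + z ^ 2 ≠ n * x * y * z := by
  induction hs : x + y + z using Nat.strong_induction_on generalizing x y z with
  | _ s ih =>
  intro heq
  rcases lt_or_ge (x ^ 2 + y ^ 2) (z ^ 2) with hxy | hxy
  · obtain ⟨z', hz', hz'0, heq'⟩ := exists_lt_of_sq_add_sq_lt (n := n) hy heq hxy
    exact ih _ (by omega) hx hy hz'0 rfl heq'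
  rcases lt_or_ge (x ^ 2 + z ^ 2) (y ^ 2) with hxz | hxz
  · obtain ⟨y', hy', hy'0, heq'⟩ := exists_lt_of_sq_add_sq_lt (n := n) hz (by linarith) hxz
    exact ih _ (by omega) hx hy'0 hz rfl (by linarith)
  rcases lt_or_ge (y ^ 2 + z ^ 2) (x ^ 2) with hyz | hyz
  · obtain ⟨x', hx', hx'0, heq'⟩ := exists_lt_of_sq_add_sq_lt (n := n) hz (by linarith) hyz
    exact ih _ (by omega) hx'0 hy hz rfl (by linarith)
  have h₁ := Nat.mul_le_mul_left x (le_mul_of_sq_le_sq_add_sq hy hz hyz)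
  have h₂ := Nat.mul_le_mul_left y (le_mul_of_sq_le_sq_add_sq hx hz hxz)
  have h₃ := Nat.mul_le_mul_left z (le_mul_of_sq_le_sq_add_sq hx hy hxy)
  have : 0 < x * y * z := by positivity
  nlinarith

theorem coprime_of_sq_add_sq_add_sq_eq_three_mul {p a b : ℕ} (hp : 0 < p) (ha : 0 < a)
    (hb : 0 < b) (hM : p ^ 2 + a ^ 2 + b ^ 2 = 3 * p * a * b) : p.Coprime a := by
  by_contra hpa
  obtain ⟨q, hq, hqpa⟩ := Nat.exists_prime_and_dvd hpa
  have hqp := hqpa.trans (Nat.gcd_dvd_left p a)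
  have hqa := hqpa.trans (Nat.gcd_dvd_right p a)
  have hqb : q ∣ b := by
    have hsum : q ∣ p ^ 2 + a ^ 2 + b ^ 2 := hM ▸ ((hqp.mul_left 3).mul_right a).mul_right b
    refine hq.dvd_of_dvd_pow (n := 2) ((Nat.dvd_add_right ?_).1 hsum)
    exact dvd_add (dvd_pow hqp two_ne_zero) (dvd_pow hqa two_ne_zero)
  obtain ⟨P, rfl⟩ := hqp
  obtain ⟨A, rfl⟩ := hqa
  obtain ⟨B, rfl⟩ := hqb
  have hq0 := hq.pos
  refine sq_add_sq_add_sq_ne_mul_of_four_le (n := 3 * q) (by linarith [hq.two_le])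
    (pos_of_mul_pos_right hp hq0.le) (pos_of_mul_pos_right ha hq0.le)
    (pos_of_mul_pos_right hb hq0.le) (Nat.eq_of_mul_eq_mul_left (pow_pos hq0 2) ?_)
  linear_combination hM

theorem sq_modEq_neg_one_of_dvd_sq_add_sq {p a b u : ℤ} (hpa : IsCoprime p a)
    (hab : p ∣ a ^ 2 + b ^ 2) (hb : b ≡ u * a [ZMOD p] ∨ b ≡ -u * a [ZMOD p]) :
    u ^ 2 ≡ -1 [ZMOD p] := by
  have hb2 : b ^ 2 ≡ (u * a) ^ 2 [ZMOD p] := by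
    rcases hb with hb | hb
    · exact hb.pow 2
    · simpa only [neg_mul, neg_sq] using hb.pow 2
  have hdvd : p ∣ (u ^ 2 + 1) * a ^ 2 := by
    rw [show (u ^ 2 + 1) * a ^ 2 = ((u * a) ^ 2 - b ^ 2) + (a ^ 2 + b ^ 2) by ring]
    exact dvd_add hb2.dvd hab
  refine (Int.modEq_iff_dvd.2 ?_).symm
  rw [sub_neg_eq_add]
  exact hpa.pow_right.dvd_of_dvd_mul_right hdvd

theorem markov_characteristic_number_sq_general (p a b : ℕ) (u : ℤ)
    (hp : 0 < p) (ha : 0 < a) (hb : 0 < b)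
    (hM : p ^ 2 + a ^ 2 + b ^ 2 = 3 * p * a * b)
    (hcong : (b : ℤ) ≡ u * a [ZMOD (p : ℤ)] ∨ (b : ℤ) ≡ -u * a [ZMOD (p : ℤ)]) :
    u ^ 2 ≡ -1 [ZMOD (p : ℤ)] := by
  have hpa : IsCoprime (p : ℤ) a :=
    Nat.isCoprime_iff_coprime.2 (coprime_of_sq_add_sq_add_sq_eq_three_mul hp ha hb hM)
  have hMℤ : (p : ℤ) ^ 2 + a ^ 2 + b ^ 2 = 3 * p * a * b := by exact_mod_cast hM
  have hab : (p : ℤ) ∣ a ^ 2 + b ^ 2 := ⟨3 * a * b - p, by linear_combination hMℤ⟩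
  exact sq_modEq_neg_one_of_dvd_sq_add_sq hpa hab hcong

theorem markov_characteristic_number_sq (p a b : ℕ) (u : ℤ)
    (hp : 0 < p) (ha : 0 < a) (hb : 0 < b)
    (hM : p ^ 2 + a ^ 2 + b ^ 2 = 3 * p * a * b)
    (hpa : a < p) (hpb : b < p)
    (hu0 : 0 < u) (hu2 : 2 * u < (p : ℤ))
    (hcong : (b : ℤ) ≡ u * a [ZMOD (p : ℤ)] ∨ (b : ℤ) ≡ -u * a [ZMOD (p : ℤ)]) :
    u ^ 2 ≡ -1 [ZMOD (p : ℤ)] :=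
  markov_characteristic_number_sq_general p a b u hp ha hb hM hcong
end

section
/- For every n ≥ 1, the Hirzebruch–Jung continued fraction expansion [3, 3, ..., 3, 2] with (n−1) threes followed by a single 2 equals F(2n+1)/F(2n-1), where [a1,...,ak] := a1 − 1/(a2 − 1/(··· − 1/ak)) and F denotes the odd-indexed Fibonacci numbers with F(1)=1, F(3)=2, F(2n+3)=3F(2n+1)−F(2n-1). -/
/-- `oddFib n = F(2n+1)`, the odd-indexed Fibonacci numbers:
`F(1) = 1`, `F(3) = 2`, `F(2n+3) = 3·F(2n+1) − F(2n-1)`. -/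
def oddFib : ℕ → ℤ
  | 0 => 1
  | 1 => 2
  | n + 2 => 3 * oddFib (n + 1) - oddFib n

/-- Hirzebruch–Jung continued fraction `[a1,...,ak] = a1 - 1/(a2 - 1/(... - 1/ak))`.
(Note `hj [a] = a` since `1/0 = 0` in `ℚ`.) -/
def hj : List ℚ → ℚ
  | [] => 0
  | a :: l => a - 1 / hj l

/-! Prepending a `3` maps `x` to `3 - 1/x`, and the recurrence of `oddFib` says exactly that
`p/q ↦ 3 - q/p` sends `oddFib (m + 1) / oddFib m` to `oddFib (m + 2) / oddFib (m + 1)`.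
The denominators stay nonzero because `oddFib` is positive and increasing: `3p - q > p` when `p > q`. -/

theorem oddFib_add_two (n : ℕ) : oddFib (n + 2) = 3 * oddFib (n + 1) - oddFib n := rfl

theorem oddFib_pos_and_lt_succ (n : ℕ) : 0 < oddFib n ∧ oddFib n < oddFib (n + 1) := by
  induction n with
  | zero => simp [oddFib]
  | succ m ih =>
    obtain ⟨hpos, hlt⟩ := ih
    exact ⟨hpos.trans hlt, by rw [oddFib_add_two]; linarith⟩

theorem oddFib_pos (n : ℕ) : 0 < oddFib n := (oddFib_pos_and_lt_succ n).1

theorem hj_cons (a : ℚ) (l : List ℚ) : hj (a :: l) = a - 1 / hj l := rfl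

theorem hj_replicate_three_append_two (m : ℕ) :
    hj (List.replicate m 3 ++ [2]) = (oddFib (m + 1) : ℚ) / oddFib m := by
  induction m with
  | zero => norm_num [hj, oddFib]
  | succ k ih =>
    have hk : (oddFib k : ℚ) ≠ 0 := mod_cast (oddFib_pos k).ne'
    have hk1 : (oddFib (k + 1) : ℚ) ≠ 0 := mod_cast (oddFib_pos (k + 1)).ne'
    rw [List.replicate_succ, List.cons_append, hj_cons, ih, oddFib_add_two]
    push_cast
    field_simp

theorem hj_oddFib (n : ℕ) (hn : 1 ≤ n) :
    hj (List.replicate (n - 1) 3 ++ [2]) = (oddFib n : ℚ) / (oddFib (n - 1) : ℚ) := by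
  obtain ⟨m, rfl⟩ := Nat.exists_eq_add_of_le' hn
  simpa using hj_replicate_three_append_two m
end

section
/- Let Λ(2,2,2) be the lattice on free abelian group with generators v1, v2, v3 and pairing vi·vi = 2, vi·vj = −1 if |i−j| = 1, and 0 otherwise. Then any lattice embedding of Λ(2,2,2) into Z^m (m ≥ 4, standard positive definite pairing) is, up to reordering and sign changes of the orthonormal basis, either given by v1 ↦ −e1+e2, v2 ↦ −e2+e3, v3 ↦ e1+e2, or by v1 ↦ −e1+e2, v2 ↦ −e2+e3, v3 ↦ −e3+e4. -/
/-- The `k`-th standard basis vector of `ℤ^m` (0-indexed: `stdVec m 0 = e1`). -/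
def stdVec (m k : ℕ) : Fin m → ℤ := fun i => if (i : ℕ) = k then 1 else 0

/-- Standard dot product on `ℤ^m`. -/
def dotZ (m : ℕ) (x y : Fin m → ℤ) : ℤ := ∑ i, x i * y i

/-- Gram matrix of the linear lattice `Λ(2,2,2)`. -/
def gram222 : Matrix (Fin 3) (Fin 3) ℤ := !![2, -1, 0; -1, 2, -1; 0, -1, 2]

lemma int_unit {s : ℤ} (h : s * s = 1) : s = 1 ∨ s = -1 :=
  Int.isUnit_iff.mp (IsUnit.of_mul_eq_one _ h)

/-- A vector of norm 2 has exactly two nonzero coordinates, both ±1. -/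
lemma sq_two {m : ℕ} (x : Fin m → ℤ) (h : ∑ i, x i * x i = 2) :
    ∃ a b, a ≠ b ∧ x a * x a = 1 ∧ x b * x b = 1 ∧ ∀ i, i ≠ a → i ≠ b → x i = 0 := by
  classical
  set S := Finset.univ.filter (fun i => x i ≠ 0) with hS
  have hsum : ∑ i ∈ S, x i * x i = 2 := by
    rw [← h]
    apply Finset.sum_filter_of_ne
    intro i _ hi h0
    rw [h0] at hi; simp at hi
  have hone : ∀ i ∈ S, (1:ℤ) ≤ x i * x i := by
    intro i hi
    rw [hS, Finset.mem_filter] at hi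
    have := mul_self_pos.mpr hi.2
    omega
  have hcard : S.card ≤ 2 := by
    have := Finset.card_nsmul_le_sum S _ 1 hone
    simp at this
    omega
  interval_cases hc : S.card
  · rw [Finset.card_eq_zero] at hc
    rw [hc] at hsum; simp at hsum
  · obtain ⟨a, ha⟩ := Finset.card_eq_one.mp hc
    rw [ha, Finset.sum_singleton] at hsum
    have h1 : x a ≤ -2 ∨ x a = -1 ∨ x a = 0 ∨ x a = 1 ∨ 2 ≤ x a := by omega
    rcases h1 with h1|h1|h1|h1|h1 <;> nlinarith
  · obtain ⟨a, b, hab, hS2⟩ := Finset.card_eq_two.mp hc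
    rw [hS2, Finset.sum_pair hab] at hsum
    have h1 : (1:ℤ) ≤ x a * x a := hone a (by rw [hS2]; simp)
    have h2 : (1:ℤ) ≤ x b * x b := hone b (by rw [hS2]; simp)
    refine ⟨a, b, hab, by omega, by omega, ?_⟩
    intro i hia hib
    by_contra h0
    have : i ∈ S := by rw [hS, Finset.mem_filter]; exact ⟨Finset.mem_univ _, h0⟩
    rw [hS2, Finset.mem_insert, Finset.mem_singleton] at this
    tauto

lemma dot_two {m : ℕ} (x y : Fin m → ℤ) (a b : Fin m) (hab : a ≠ b)
    (hx : ∀ i, i ≠ a → i ≠ b → x i = 0) :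
    dotZ m x y = x a * y a + x b * y b := by
  classical
  have h1 : dotZ m x y = ∑ i ∈ ({a, b} : Finset (Fin m)), x i * y i := by
    rw [dotZ]
    symm
    apply Finset.sum_subset (Finset.subset_univ _)
    intro i _ hi
    rw [Finset.mem_insert, Finset.mem_singleton] at hi
    push_neg at hi
    rw [hx i hi.1 hi.2, zero_mul]
  rw [h1, Finset.sum_pair hab]

/-- Two norm-2 vectors with dot product -1 share exactly one coordinate. -/
lemma link {m : ℕ} (x y : Fin m → ℤ) (a b c d : Fin m) (hab : a ≠ b) (hcd : c ≠ d)
    (hxa : x a * x a = 1) (hxb : x b * x b = 1) (hyc : y c * y c = 1) (hyd : y d * y d = 1)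
    (hxz : ∀ i, i ≠ a → i ≠ b → x i = 0) (hyz : ∀ i, i ≠ c → i ≠ d → y i = 0)
    (hxy : x a * y a + x b * y b = -1) :
    ∃ p u w, u ≠ p ∧ p ≠ w ∧ u ≠ w ∧
      x u * x u = 1 ∧ x p * x p = 1 ∧ y p * y p = 1 ∧ y w * y w = 1 ∧
      x p * y p = -1 ∧ y u = 0 ∧ x w = 0 ∧
      (∀ i, i ≠ u → i ≠ p → x i = 0) ∧ (∀ i, i ≠ p → i ≠ w → y i = 0) := by
  classical
  have hya : y a = 0 ∨ y a * y a = 1 := by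
    by_cases h1 : a = c
    · right; rw [h1]; exact hyc
    · by_cases h2 : a = d
      · right; rw [h2]; exact hyd
      · left; exact hyz a h1 h2
  have hyb : y b = 0 ∨ y b * y b = 1 := by
    by_cases h1 : b = c
    · right; rw [h1]; exact hyc
    · by_cases h2 : b = d
      · right; rw [h2]; exact hyd
      · left; exact hyz b h1 h2
  have key : (x a * y a = -1 ∧ y b = 0) ∨ (y a = 0 ∧ x b * y b = -1) := by
    rcases hya with h1|h1 <;> rcases hyb with h2|h2
    · exfalso; rw [h1, h2] at hxy; simp at hxy
    · right; rw [h1, mul_zero, zero_add] at hxy; exact ⟨h1, hxy⟩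
    · left; rw [h2, mul_zero, add_zero] at hxy; exact ⟨hxy, h2⟩
    · exfalso
      rcases int_unit hxa with e1|e1 <;> rcases int_unit hxb with e2|e2 <;>
        rcases int_unit h1 with g1|g1 <;> rcases int_unit h2 with g2|g2 <;>
          rw [e1, e2, g1, g2] at hxy <;> omega
  have main : ∀ p u : Fin m, u ≠ p → x u * x u = 1 → x p * x p = 1 →
      x p * y p = -1 → y u = 0 → (∀ i, i ≠ u → i ≠ p → x i = 0) →
      ∃ p' u' w, u' ≠ p' ∧ p' ≠ w ∧ u' ≠ w ∧
      x u' * x u' = 1 ∧ x p' * x p' = 1 ∧ y p' * y p' = 1 ∧ y w * y w = 1 ∧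
      x p' * y p' = -1 ∧ y u' = 0 ∧ x w = 0 ∧
      (∀ i, i ≠ u' → i ≠ p' → x i = 0) ∧ (∀ i, i ≠ p' → i ≠ w → y i = 0) := by
    intro p u hup hxu hxp hxyp hyu hx'
    have hyp : y p ≠ 0 := by
      intro h0; rw [h0, mul_zero] at hxyp; omega
    have hyp2 : y p * y p = 1 := by
      rcases (em (p = c)) with h|h
      · rw [h]; exact hyc
      · rcases (em (p = d)) with h'|h'
        · rw [h']; exact hyd
        · exact absurd (hyz p h h') hyp
    have hpcd : p = c ∨ p = d := by
      by_contra h; push_neg at h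
      exact hyp (hyz p h.1 h.2)
    rcases hpcd with h|h
    · subst h
      have hdu : d ≠ u := by
        intro h0; rw [← h0] at hyu
        rw [hyu] at hyd; simp at hyd
      refine ⟨p, u, d, hup, hcd, fun h0 => hdu h0.symm, hxu, hxp, hyp2, hyd, hxyp, hyu, ?_,
        hx', ?_⟩
      · exact hx' d (fun h0 => hdu h0) (fun h0 => hcd h0.symm)
      · intro i h1 h2; exact hyz i h1 h2
    · subst h
      have hcu : c ≠ u := by
        intro h0; rw [← h0] at hyu
        rw [hyu] at hyc; simp at hyc
      refine ⟨p, u, c, hup, fun h0 => hcd h0.symm, fun h0 => hcu h0.symm, hxu, hxp, hyp2,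
        hyc, hxyp, hyu, ?_, hx', ?_⟩
      · exact hx' c (fun h0 => hcu h0) hcd
      · intro i h1 h2; exact hyz i h2 h1
  rcases key with ⟨h1, h2⟩|⟨h1, h2⟩
  · exact main a b hab.symm hxb hxa h1 h2 (fun i hi1 hi2 => hxz i hi2 hi1)
  · exact main b a hab hxa hxb h2 h1 hxz

lemma perm_step {m : ℕ} (σ : Equiv.Perm (Fin m)) (k t : Fin m) :
    (σ * Equiv.swap k (σ⁻¹ t)) k = t := by
  simp [Equiv.Perm.mul_apply]

lemma perm_step' {m : ℕ} (σ : Equiv.Perm (Fin m)) (k t j : Fin m) (hj : j ≠ k)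
    (ht : σ j ≠ t) : (σ * Equiv.swap k (σ⁻¹ t)) j = σ j := by
  have h2 : j ≠ σ⁻¹ t := by
    intro h0; apply ht; rw [h0]; simp
  rw [Equiv.Perm.mul_apply, Equiv.swap_apply_of_ne_of_ne hj h2]

lemma exists_perm4 {m : ℕ} (k0 k1 k2 k3 u p w r : Fin m)
    (e01 : k0 ≠ k1) (e02 : k0 ≠ k2) (e03 : k0 ≠ k3) (e12 : k1 ≠ k2) (e13 : k1 ≠ k3)
    (e23 : k2 ≠ k3)
    (h1 : u ≠ p) (h2 : u ≠ w) (h3 : u ≠ r) (h4 : p ≠ w) (h5 : p ≠ r) (h6 : w ≠ r) :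
    ∃ σ : Equiv.Perm (Fin m), σ k0 = u ∧ σ k1 = p ∧ σ k2 = w ∧ σ k3 = r := by
  set σ1 : Equiv.Perm (Fin m) := Equiv.swap k0 u with hσ1
  have s10 : σ1 k0 = u := Equiv.swap_apply_left _ _
  set σ2 := σ1 * Equiv.swap k1 (σ1⁻¹ p) with hσ2
  have s21 : σ2 k1 = p := perm_step _ _ _
  have s20 : σ2 k0 = u := by
    rw [hσ2, perm_step' _ _ _ _ e01 (by rw [s10]; exact h1)]; exact s10
  set σ3 := σ2 * Equiv.swap k2 (σ2⁻¹ w) with hσ3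
  have s32 : σ3 k2 = w := perm_step _ _ _
  have s30 : σ3 k0 = u := by
    rw [hσ3, perm_step' _ _ _ _ e02 (by rw [s20]; exact h2)]; exact s20
  have s31 : σ3 k1 = p := by
    rw [hσ3, perm_step' _ _ _ _ e12 (by rw [s21]; exact h4)]; exact s21
  set σ4 := σ3 * Equiv.swap k3 (σ3⁻¹ r) with hσ4
  have s43 : σ4 k3 = r := perm_step _ _ _
  have s40 : σ4 k0 = u := by
    rw [hσ4, perm_step' _ _ _ _ e03 (by rw [s30]; exact h3)]; exact s30
  have s41 : σ4 k1 = p := by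
    rw [hσ4, perm_step' _ _ _ _ e13 (by rw [s31]; exact h5)]; exact s31
  have s42 : σ4 k2 = w := by
    rw [hσ4, perm_step' _ _ _ _ e23 (by rw [s32]; exact h6)]; exact s32
  exact ⟨σ4, s40, s41, s42, s43⟩

theorem lambda222_embeddings (m : ℕ) (hm : 4 ≤ m) (f : Fin 3 → Fin m → ℤ)
    (hf : ∀ j l, dotZ m (f j) (f l) = gram222 j l) :
    ∃ (σ : Equiv.Perm (Fin m)) (ε : Fin m → ℤ), (∀ i, ε i = 1 ∨ ε i = -1) ∧
      ((∀ i, ε i * f 0 (σ i) = (-stdVec m 0 + stdVec m 1) i ∧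
             ε i * f 1 (σ i) = (-stdVec m 1 + stdVec m 2) i ∧
             ε i * f 2 (σ i) = (stdVec m 0 + stdVec m 1) i) ∨
       (∀ i, ε i * f 0 (σ i) = (-stdVec m 0 + stdVec m 1) i ∧
             ε i * f 1 (σ i) = (-stdVec m 1 + stdVec m 2) i ∧
             ε i * f 2 (σ i) = (-stdVec m 2 + stdVec m 3) i)) := by
  classical
  obtain ⟨a0, b0, hab0, ha0, hb0, hz0⟩ := sq_two (f 0) (by simpa [dotZ, gram222] using hf 0 0)
  obtain ⟨a1, b1, hab1, ha1, hb1, hz1⟩ := sq_two (f 1) (by simpa [dotZ, gram222] using hf 1 1)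
  obtain ⟨a2, b2, hab2, ha2, hb2, hz2⟩ := sq_two (f 2) (by simpa [dotZ, gram222] using hf 2 2)
  have d01 : f 0 a0 * f 1 a0 + f 0 b0 * f 1 b0 = -1 := by
    rw [← dot_two (f 0) (f 1) a0 b0 hab0 hz0]; simpa [gram222] using hf 0 1
  have d12 : f 1 a1 * f 2 a1 + f 1 b1 * f 2 b1 = -1 := by
    rw [← dot_two (f 1) (f 2) a1 b1 hab1 hz1]; simpa [gram222] using hf 1 2
  obtain ⟨p, u, w, hup, hpw, huw, hxu, hxp, hyp, hyw, hxyp, hyu, hxw, hsx, hsy⟩ :=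
    link (f 0) (f 1) a0 b0 a1 b1 hab0 hab1 ha0 hb0 ha1 hb1 hz0 hz1 d01
  obtain ⟨q, u1, w2, hu1q, hqw2, hu1w2, gxu, gxq, gyq, gyw2, gxyq, gyu1, gxw2, gsx, gsy⟩ :=
    link (f 1) (f 2) a1 b1 a2 b2 hab1 hab2 ha1 hb1 ha2 hb2 hz1 hz2 d12
  have e02 : f 0 u * f 2 u + f 0 p * f 2 p = 0 := by
    rw [← dot_two (f 0) (f 2) u p hup hsx]; simpa [gram222] using hf 0 2
  have hq : q = p ∨ q = w := by
    have hne : f 1 q ≠ 0 := by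
      intro h0; rw [h0] at gxq; simp at gxq
    by_contra h; push_neg at h; exact hne (hsy q h.1 h.2)
  rcases hq with hq|hq
  · -- Case A: the chain closes up, f2 shares both coordinates with f0
    rw [hq] at hu1q hqw2 gxq gyq gxyq gsx gsy
    have hf2p : f 2 p = f 0 p := by
      rcases int_unit hxp with h|h <;> rcases int_unit hyp with h'|h' <;>
        rw [h, h'] at hxyp <;> rw [h'] at gxyq <;> rw [h] <;> omega
    have hf2u : f 0 u * f 2 u = -1 := by
      have h1 : f 0 p * f 2 p = 1 := by rw [hf2p]; exact hxp
      linarith [e02, h1]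
    have hne2 : f 2 u ≠ 0 := by
      intro h0; rw [h0, mul_zero] at hf2u; omega
    have huw2 : u = w2 := by
      by_contra h
      exact hne2 (gsy u hup h)
    have hs2 : ∀ i, i ≠ p → i ≠ u → f 2 i = 0 := by
      intro i h1 h2
      exact gsy i h1 (by rw [← huw2]; exact h2)
    have hf2w : f 2 w = 0 := hs2 w hpw.symm huw.symm
    obtain ⟨r, hru, hrp, hrw⟩ : ∃ r : Fin m, r ≠ u ∧ r ≠ p ∧ r ≠ w := by
      by_contra h; push_neg at h
      have hsub : (Finset.univ : Finset (Fin m)) ⊆ {u, p, w} := by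
        intro s _
        rcases em (s = u) with h1|h1
        · simp [h1]
        · rcases em (s = p) with h2|h2
          · simp [h2]
          · simp [h s h1 h2]
      have hcard := Finset.card_le_card hsub
      have h3 : ({u, p, w} : Finset (Fin m)).card ≤ 3 :=
        le_trans (Finset.card_insert_le _ _)
          (Nat.add_le_add_right (le_trans (Finset.card_insert_le _ _)
            (Nat.add_le_add_right (le_of_eq (Finset.card_singleton w)) 1)) 1)
      rw [Finset.card_univ, Fintype.card_fin] at hcard
      omega
    obtain ⟨σ, s0, s1, s2, s3⟩ := exists_perm4 (⟨0, by omega⟩ : Fin m) ⟨1, by omega⟩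
      ⟨2, by omega⟩ ⟨3, by omega⟩ u p w r (by simp [Fin.ext_iff]) (by simp [Fin.ext_iff])
      (by simp [Fin.ext_iff]) (by simp [Fin.ext_iff]) (by simp [Fin.ext_iff])
      (by simp [Fin.ext_iff]) hup huw hru.symm hpw hrp.symm hrw.symm
    set ε : Fin m → ℤ := fun i =>
      if (i : ℕ) = 0 then -(f 0 u) else if (i : ℕ) = 1 then f 0 p
        else if (i : ℕ) = 2 then f 1 w else 1
      with hε
    refine ⟨σ, ε, ?_, Or.inl ?_⟩
    · intro i
      simp only [hε]
      split_ifs with h1 h2 h3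
      · rcases int_unit hxu with h|h <;> rw [h] <;> norm_num
      · exact int_unit hxp
      · exact int_unit hyw
      · left; rfl
    · intro i
      by_cases h1 : (i : ℕ) = 0
      · have hi : i = (⟨0, by omega⟩ : Fin m) := Fin.ext (by simpa using h1)
        have hσ : σ i = u := by rw [hi]; exact s0
        rw [hσ]
        simp [hε, stdVec, h1, hxu, hyu, hf2u]
      · by_cases h2 : (i : ℕ) = 1
        · have hi : i = (⟨1, by omega⟩ : Fin m) := Fin.ext (by simpa using h2)
          have hσ : σ i = p := by rw [hi]; exact s1
          rw [hσ]
          simp [hε, stdVec, h1, h2, hxp, hxyp, hf2p]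
        · by_cases h3 : (i : ℕ) = 2
          · have hi : i = (⟨2, by omega⟩ : Fin m) := Fin.ext (by simpa using h3)
            have hσ : σ i = w := by rw [hi]; exact s2
            rw [hσ]
            simp [hε, stdVec, h1, h2, h3, hxw, hyw, hf2w]
          · have w0 : σ i ≠ u := fun h =>
              h1 (congrArg Fin.val (σ.injective (h.trans s0.symm)))
            have w1 : σ i ≠ p := fun h =>
              h2 (congrArg Fin.val (σ.injective (h.trans s1.symm)))
            have w2' : σ i ≠ w := fun h =>
              h3 (congrArg Fin.val (σ.injective (h.trans s2.symm)))
            have z0 : f 0 (σ i) = 0 := hsx _ w0 w1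
            have z1 : f 1 (σ i) = 0 := hsy _ w1 w2'
            have z2 : f 2 (σ i) = 0 := hs2 _ w1 w0
            simp [hε, stdVec, h1, h2, h3, z0, z1, z2]
  · -- Case B: the chain is a path on four distinct coordinates
    rw [hq] at hu1q hqw2 gxq gyq gxyq gsx gsy
    have hpu1 : p = u1 := by
      by_contra h
      have h0 : f 1 p = 0 := gsx p h hpw
      rw [h0, mul_zero] at hxyp; omega
    have hf2p : f 2 p = 0 := by rw [hpu1]; exact gyu1
    have hf2u : f 2 u = 0 := by
      have hh : f 0 u * f 2 u = 0 := by
        rw [hf2p, mul_zero] at e02; linarith [e02]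
      rcases int_unit hxu with h|h <;> rw [h] at hh <;> omega
    have hru : w2 ≠ u := by
      intro h0; rw [h0, hf2u] at gyw2; simp at gyw2
    have hrp : w2 ≠ p := by
      intro h0; rw [h0, hf2p] at gyw2; simp at gyw2
    obtain ⟨σ, s0, s1, s2, s3⟩ := exists_perm4 (⟨0, by omega⟩ : Fin m) ⟨1, by omega⟩
      ⟨2, by omega⟩ ⟨3, by omega⟩ u p w w2 (by simp [Fin.ext_iff]) (by simp [Fin.ext_iff])
      (by simp [Fin.ext_iff]) (by simp [Fin.ext_iff]) (by simp [Fin.ext_iff])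
      (by simp [Fin.ext_iff]) hup huw hru.symm hpw hrp.symm hqw2
    set ε : Fin m → ℤ := fun i =>
      if (i : ℕ) = 0 then -(f 0 u) else if (i : ℕ) = 1 then f 0 p
        else if (i : ℕ) = 2 then f 1 w else if (i : ℕ) = 3 then f 2 w2 else 1
      with hε
    refine ⟨σ, ε, ?_, Or.inr ?_⟩
    · intro i
      simp only [hε]
      split_ifs with h1 h2 h3 h4
      · rcases int_unit hxu with h|h <;> rw [h] <;> norm_num
      · exact int_unit hxp
      · exact int_unit hyw
      · exact int_unit gyw2
      · left; rfl
    · intro i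
      by_cases h1 : (i : ℕ) = 0
      · have hi : i = (⟨0, by omega⟩ : Fin m) := Fin.ext (by simpa using h1)
        have hσ : σ i = u := by rw [hi]; exact s0
        rw [hσ]
        simp [hε, stdVec, h1, hxu, hyu, hf2u]
      · by_cases h2 : (i : ℕ) = 1
        · have hi : i = (⟨1, by omega⟩ : Fin m) := Fin.ext (by simpa using h2)
          have hσ : σ i = p := by rw [hi]; exact s1
          rw [hσ]
          simp [hε, stdVec, h1, h2, hxp, hxyp, hf2p]
        · by_cases h3 : (i : ℕ) = 2
          · have hi : i = (⟨2, by omega⟩ : Fin m) := Fin.ext (by simpa using h3)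
            have hσ : σ i = w := by rw [hi]; exact s2
            rw [hσ]
            simp [hε, stdVec, h1, h2, h3, hxw, hyw, gxyq]
          · by_cases h4 : (i : ℕ) = 3
            · have hi : i = (⟨3, by omega⟩ : Fin m) := Fin.ext (by simpa using h4)
              have hσ : σ i = w2 := by rw [hi]; exact s3
              rw [hσ]
              have z : f 0 w2 = 0 := hsx w2 hru hrp
              simp [hε, stdVec, h1, h2, h3, h4, z, gxw2, gyw2]
            · have w0 : σ i ≠ u := fun h =>
                h1 (congrArg Fin.val (σ.injective (h.trans s0.symm)))
              have w1 : σ i ≠ p := fun h =>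
                h2 (congrArg Fin.val (σ.injective (h.trans s1.symm)))
              have w2' : σ i ≠ w := fun h =>
                h3 (congrArg Fin.val (σ.injective (h.trans s2.symm)))
              have w3 : σ i ≠ w2 := fun h =>
                h4 (congrArg Fin.val (σ.injective (h.trans s3.symm)))
              have z0 : f 0 (σ i) = 0 := hsx _ w0 w1
              have z1 : f 1 (σ i) = 0 := hsy _ w1 w2'
              have z2 : f 2 (σ i) = 0 := gsy _ w2' w3
              simp [hε, stdVec, h1, h2, h3, h4, z0, z1, z2]
end

section
/- There is no lattice embedding of Λ(9) ⊕ Λ(2,2,2,3) into Z^5 such that every standard basis vector of Z^5 has nonzero pairing with both the image of Λ(9) and the image of Λ(2,2,2,3). -/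
/-!
Let `x` be the image of the generator of `Λ(9)`. Its coordinates are its pairings with the basis
vectors, so they are nonzero integers whose squares sum to `9`. Each square is then at most
`9 - 4 = 5`, hence equal to `1` or `4`, and five such numbers cannot sum to `9`: the sum is
`5 + 3m` for some `m`.
-/

/-- Standard dot product on `ℤ^5`. -/
def dotZ5 (x y : Fin 5 → ℤ) : ℤ := ∑ i, x i * y i

/-- Gram matrix of `Λ(9) ⊕ Λ(2,2,2,3)`: generator `v1` of square 9, orthogonal to the
linear lattice `Λ(2,2,2,3)` with generators `v2,...,v5`. -/
def gram9_2223 : Matrix (Fin 5) (Fin 5) ℤ :=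
  !![9, 0, 0, 0, 0;
     0, 2, -1, 0, 0;
     0, -1, 2, -1, 0;
     0, 0, -1, 2, -1;
     0, 0, 0, -1, 3]

lemma Int.mul_self_eq_one_or_four {a : ℤ} (h0 : a ≠ 0) (h5 : a * a ≤ 5) :
    a * a = 1 ∨ a * a = 4 := by
  have hl : -2 ≤ a := by nlinarith
  have hr : a ≤ 2 := by nlinarith
  interval_cases a <;> omega

lemma dotZ5_self_ne_nine {x : Fin 5 → ℤ} (hx : ∀ i, x i ≠ 0) : dotZ5 x x ≠ 9 := by
  intro h9
  simp only [dotZ5, Fin.sum_univ_five] at h9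
  have hpos : ∀ i, 0 < x i * x i := fun i => mul_self_pos.mpr (hx i)
  have h0 := hpos 0; have h1 := hpos 1; have h2 := hpos 2; have h3 := hpos 3; have h4 := hpos 4
  have c0 := Int.mul_self_eq_one_or_four (hx 0) (by omega)
  have c1 := Int.mul_self_eq_one_or_four (hx 1) (by omega)
  have c2 := Int.mul_self_eq_one_or_four (hx 2) (by omega)
  have c3 := Int.mul_self_eq_one_or_four (hx 3) (by omega)
  have c4 := Int.mul_self_eq_one_or_four (hx 4) (by omega)
  omega

theorem B31_no_embedding :
    ¬ ∃ f : Fin 5 → Fin 5 → ℤ,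
      (∀ j l, dotZ5 (f j) (f l) = gram9_2223 j l) ∧
      (∀ k : Fin 5, f 0 k ≠ 0 ∧ ∃ j : Fin 5, j ≠ 0 ∧ f j k ≠ 0) := by
  rintro ⟨f, hgram, hcoord⟩
  exact dotZ5_self_ne_nine (fun k => (hcoord k).1) (hgram 0 0)
end

section
/- The determinant of the linear lattice Λ(3^{n-1}, 2, 2, 3^{n-1}, 2) (i.e., n−1 threes, then 2, 2, then n−1 threes, then 2) equals F(2n+1)², where F denotes the odd-indexed Fibonacci numbers with F(1)=1, F(3)=2, F(2n+3)=3F(2n+1)−F(2n-1), for all n ≥ 2. -/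
/-- The diagonal `(3^{n-1}, 2, 2, 3^{n-1}, 2)` of the linear lattice, of length `2n+1`. -/
def diagWeights (n : ℕ) (i : Fin (2 * n + 1)) : ℤ :=
  if (i : ℕ) < n - 1 then 3
  else if (i : ℕ) < n + 1 then 2
  else if (i : ℕ) < 2 * n then 3
  else 2

/-- Gram matrix of the linear lattice `Λ(3^{n-1},2,2,3^{n-1},2)`. -/
def gramLattice (n : ℕ) : Matrix (Fin (2 * n + 1)) (Fin (2 * n + 1)) ℤ :=
  Matrix.of fun i j =>
    if i = j then diagWeights n i
    else if (i : ℕ) + 1 = (j : ℕ) ∨ (j : ℕ) + 1 = (i : ℕ) then -1 else 0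

/-!
The Gram matrix is tridiagonal, so its determinant is the continuant `c` of its diagonal `a`:
`c (k + 2) = a (k + 1) * c (k + 1) - c k`. Along a run of entries `3` this is the recursion
`x (k + 2) = 3 * x (k + 1) - x k` of the even-indexed Fibonacci numbers, so `j` consecutive threes
act on `(c a, c (a + 1))` linearly with coefficients `F (2j)` and `F (2j + 2)`. Following the blocks
`3^{m+1}, 2, 2, 3^{m+1}, 2` (where `n = m + 2`) writes the determinant as a quadratic form in
`F (2m)` and `F (2m + 1)` which is identically `F (2m + 5) ^ 2 = oddFib n ^ 2`.
-/

open Nat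

def continuant {R : Type*} [CommRing R] (d : ℕ → R) : ℕ → R
  | 0 => 1
  | 1 => d 0
  | k + 2 => d (k + 1) * continuant d (k + 1) - continuant d k

namespace Matrix

variable {R : Type*} [CommRing R]

theorem det_eq_mul_det_submatrix_castSucc_of_last_col_eq_zero {m : ℕ}
    (A : Matrix (Fin (m + 1)) (Fin (m + 1)) R) (h : ∀ i : Fin m, A i.castSucc (Fin.last m) = 0) :
    A.det = A (Fin.last m) (Fin.last m) * (A.submatrix Fin.castSucc Fin.castSucc).det := by
  rw [det_succ_column A (Fin.last m), Fin.sum_univ_castSucc]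
  simp [h, Fin.succAbove_last]

def tridiag (d : ℕ → R) (m : ℕ) : Matrix (Fin m) (Fin m) R :=
  of fun i j => if (i : ℕ) = j then d i else if (i : ℕ) + 1 = j ∨ (j : ℕ) + 1 = i then -1 else 0

variable (d : ℕ → R) {m : ℕ}

@[simp]
theorem tridiag_apply_self (i : Fin m) : tridiag d m i i = d i := by
  simp [tridiag]

theorem tridiag_apply_of_adjacent {i j : Fin m} (h : (i : ℕ) + 1 = j ∨ (j : ℕ) + 1 = i) :
    tridiag d m i j = -1 := by
  simp only [tridiag, of_apply]
  rw [if_neg (by omega), if_pos h]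

theorem tridiag_apply_of_far {i j : Fin m} (h : (i : ℕ) + 1 < j ∨ (j : ℕ) + 1 < i) :
    tridiag d m i j = 0 := by
  simp only [tridiag, of_apply]
  rw [if_neg (by omega), if_neg (by omega)]

theorem submatrix_castSucc_tridiag (m : ℕ) :
    (tridiag d (m + 1)).submatrix Fin.castSucc Fin.castSucc = tridiag d m := by
  ext i j
  simp [tridiag]

theorem det_tridiag (m : ℕ) : (tridiag d m).det = continuant d m := by
  induction m using Nat.twoStepInduction with
  | zero => simp [continuant]
  | one => simp [continuant]
  | more m ih₀ ih₁ =>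
    -- the minor of the entry `(m + 1, m)` has last column `(0, …, 0, -1)`
    have hminor : ((tridiag d (m + 2)).submatrix Fin.castSucc
        (Fin.last m).castSucc.succAbove).det = -continuant d m := by
      rw [det_eq_mul_det_submatrix_castSucc_of_last_col_eq_zero, submatrix_submatrix]
      · have hcol : (Fin.last m).castSucc.succAbove ∘ Fin.castSucc =
            Fin.castSucc ∘ Fin.castSucc := by
          ext j
          simp [Fin.succAbove_castSucc_of_lt _ _ j.castSucc_lt_last]
        rw [hcol, ← submatrix_submatrix, submatrix_castSucc_tridiag, submatrix_castSucc_tridiag,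
          ih₀, submatrix_apply, Fin.succAbove_castSucc_self, Fin.succ_last,
          tridiag_apply_of_adjacent _ (by simp)]
        ring
      · intro i
        rw [submatrix_apply, Fin.succAbove_castSucc_self, Fin.succ_last,
          tridiag_apply_of_far _ (by simp)]
    rw [det_succ_row _ (Fin.last (m + 1)), Fin.sum_univ_castSucc, Fin.sum_univ_castSucc,
      Finset.sum_eq_zero fun j _ => by rw [tridiag_apply_of_far _ (by simp), mul_zero, zero_mul],
      Fin.succAbove_last, hminor, tridiag_apply_of_adjacent _ (by simp), tridiag_apply_self,
      submatrix_castSucc_tridiag, ih₁, continuant, Fin.val_castSucc, Fin.val_last, Fin.val_last,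
      Odd.neg_one_pow ⟨m, by ring⟩, Even.neg_one_pow ⟨m + 1, rfl⟩]
    ring

end Matrix

open Matrix

theorem Nat.fib_add_four_add_fib (k : ℕ) : fib (k + 4) + fib k = 3 * fib (k + 2) := by
  simp only [fib_add_two]
  ring

theorem oddFib_eq_fib (n : ℕ) : oddFib n = fib (2 * n + 1) := by
  induction n using Nat.twoStepInduction with
  | zero => rfl
  | one => rfl
  | more n ih₀ ih₁ =>
    have hfib := fib_add_four_add_fib (2 * n + 1)
    rw [oddFib, ih₀, ih₁, show 2 * (n + 2) + 1 = 2 * n + 1 + 4 by ring,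
      show 2 * (n + 1) + 1 = 2 * n + 1 + 2 by ring]
    omega

section continuant

variable {R : Type*} [CommRing R] {d : ℕ → R}

theorem continuant_eq_fib_of_forall_lt_eq_three {j : ℕ} (h : ∀ k < j, d k = 3) :
    continuant d j = fib (2 * j + 2) := by
  induction j using Nat.twoStepInduction with
  | zero => simp [continuant]
  | one => simp [continuant, h 0 one_pos, fib_add_two]
  | more j ih₀ ih₁ =>
    have hfib := congrArg (Nat.cast : ℕ → R) (fib_add_four_add_fib (2 * j + 2))
    push_cast at hfib
    rw [continuant, h (j + 1) (by omega), ih₀ fun k hk => h k (by omega),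
      ih₁ fun k hk => h k (by omega)]
    linear_combination (norm := ring_nf) -hfib

theorem continuant_add_eq_of_forall_eq_three {a j : ℕ} (h : ∀ k, a < k → k ≤ a + j → d k = 3) :
    continuant d (a + j + 1) =
      fib (2 * j + 2) * continuant d (a + 1) - fib (2 * j) * continuant d a := by
  induction j using Nat.twoStepInduction with
  | zero => simp
  | one => simp [continuant, h (a + 1) (by omega) le_rfl, fib_add_two]
  | more j ih₀ ih₁ =>
    have hfib₀ := congrArg (Nat.cast : ℕ → R) (fib_add_four_add_fib (2 * j))
    have hfib₁ := congrArg (Nat.cast : ℕ → R) (fib_add_four_add_fib (2 * j + 2))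
    push_cast at hfib₀ hfib₁
    rw [show a + (j + 2) + 1 = a + j + 1 + 2 by ring, continuant,
      h (a + j + 2) (by omega) (by omega), show a + j + 1 + 1 = a + (j + 1) + 1 by ring,
      ih₀ fun k hk _ => h k hk (by omega), ih₁ fun k hk _ => h k hk (by omega)]
    linear_combination (norm := ring_nf) continuant d a * hfib₀ - continuant d (a + 1) * hfib₁

end continuant

def diagWeightsNat (n k : ℕ) : ℤ :=
  if k < n - 1 then 3 else if k < n + 1 then 2 else if k < 2 * n then 3 else 2

theorem gramLattice_eq_tridiag (n : ℕ) :
    gramLattice n = tridiag (diagWeightsNat n) (2 * n + 1) := by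
  ext i j
  simp only [gramLattice, tridiag, of_apply, Fin.ext_iff]
  rfl

theorem continuant_diagWeightsNat (m : ℕ) :
    continuant (diagWeightsNat (m + 2)) (2 * (m + 2) + 1) = (fib (2 * (m + 2) + 1) : ℤ) ^ 2 := by
  set d := diagWeightsNat (m + 2)
  have hc₀ : continuant d m = fib (2 * m + 2) :=
    continuant_eq_fib_of_forall_lt_eq_three fun k _ => by
      unfold d diagWeightsNat; split_ifs <;> omega
  have hc₁ : continuant d (m + 1) = fib (2 * m + 4) :=
    continuant_eq_fib_of_forall_lt_eq_three fun k _ => by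
      unfold d diagWeightsNat; split_ifs <;> omega
  have hc₂ : continuant d (m + 2) = 2 * continuant d (m + 1) - continuant d m := by
    rw [continuant, show d (m + 1) = 2 by unfold d diagWeightsNat; split_ifs <;> omega]
  have hc₃ : continuant d (m + 3) = 2 * continuant d (m + 2) - continuant d (m + 1) := by
    rw [continuant, show d (m + 2) = 2 by unfold d diagWeightsNat; split_ifs <;> omega]
  have hthree : ∀ k, m + 2 < k → k ≤ m + 2 + (m + 1) → d k = 3 := fun k _ _ => by
    unfold d diagWeightsNat; split_ifs <;> omega
  have hc₄ := continuant_add_eq_of_forall_eq_three (j := m) fun k hk _ => hthree k hk (by omega)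
  have hc₅ := continuant_add_eq_of_forall_eq_three hthree
  have hc₆ : continuant d (2 * m + 5) = 2 * continuant d (2 * m + 4) - continuant d (2 * m + 3) := by
    rw [continuant, show d (2 * m + 4) = 2 by unfold d diagWeightsNat; split_ifs <;> omega]
  rw [show m + 2 + m + 1 = 2 * m + 3 by ring] at hc₄
  rw [show m + 2 + (m + 1) + 1 = 2 * m + 4 by ring, show 2 * (m + 1) + 2 = 2 * m + 4 by ring,
    show 2 * (m + 1) = 2 * m + 2 by ring] at hc₅
  rw [show 2 * (m + 2) + 1 = 2 * m + 5 by ring, hc₆, hc₅, hc₄, hc₃, hc₂, hc₁, hc₀]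
  simp only [fib_add_two, Nat.cast_add]
  ring

theorem det_gramLattice (n : ℕ) (hn : 2 ≤ n) :
    (gramLattice n).det = oddFib n ^ 2 := by
  obtain ⟨m, rfl⟩ := Nat.exists_eq_add_of_le' hn
  rw [gramLattice_eq_tridiag, det_tridiag, continuant_diagWeightsNat, oddFib_eq_fib]
end
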